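/- Let M ∈ 𝕄. Denoting by u|_{X∖X*(M)} the restriction of a vector u ∈ ℝ^X to the coordinates in X∖X*(M), one has the equality of sets { μ|_{X∖X*(M)} : μ ∈ Φ(M) } = { μ|_{X∖X*(M)} : μ ∈ Φ(M/X*(M)) }. -/

import Mathlib

open MeasureTheory ProbabilityTheory Filter Set Asymptotics
open scoped ENNReal NNReal BigOperators Classical

noncomputable section

/-- A finite Markov decision process on state space `S` with pair space `X`.
The map `st : X → S` (fixed externally) assigns to each state-action pair its state;
the action sets `A(s)` are the fibers of `st`. -/
structure MDP (S X : Type) [MeasurableSpace S] where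
  /-- transition kernel: `p x` is the distribution of the next state after playing pair `x` -/
  p : X → Measure S
  p_prob : ∀ x, IsProbabilityMeasure (p x)
  /-- reward distribution of the pair `x`, a probability distribution on `[0,1] ⊆ ℝ` -/
  r : X → Measure ℝ
  r_prob : ∀ x, IsProbabilityMeasure (r x)
  r_supp : ∀ x, r x (Set.Icc (0:ℝ) 1)ᶜ = 0

namespace MDPTheory

variable {S X : Type} [Fintype S] [MeasurableSpace S] [MeasurableSingletonClass S]
  [Fintype X] [MeasurableSpace X] [MeasurableSingletonClass X]

/-- mean reward of pair `x` -/
def rbar (M : MDP S X) (x : X) : ℝ := ∫ t, t ∂(M.r x)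

/-- a randomized stationary policy: a probability distribution on the pairs of each fiber -/
def IsPolicy (st : X → S) (π : S → X → ℝ) : Prop :=
  (∀ s x, 0 ≤ π s x) ∧ (∀ s, ∑ x, π s x = 1) ∧ (∀ s x, π s x ≠ 0 → st x = s)

/-- transition matrix of the Markov chain induced by a stationary policy -/
def polStep (st : X → S) (M : MDP S X) (π : S → X → ℝ) (s s' : S) : ℝ :=
  ∑ x ∈ Finset.univ.filter (fun x => st x = s), π s x * (M.p x {s'}).toReal

/-- `polVal st M π n s` : expected total reward over `n` steps starting from `s`, playing `π` -/
def polVal (st : X → S) (M : MDP S X) (π : S → X → ℝ) : ℕ → S → ℝ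
  | 0 => fun _ => 0
  | (n+1) => fun s =>
      (∑ x ∈ Finset.univ.filter (fun x => st x = s), π s x * rbar M x)
        + ∑ s', polStep st M π s s' * polVal st M π n s'

/-- long-run average reward (gain) of a stationary policy from state `s` -/
def gain (st : X → S) (M : MDP S X) (π : S → X → ℝ) (s : S) : ℝ :=
  atTop.limsup (fun T : ℕ => polVal st M π T s / T)

/-- the optimal gain `g*(M)` -/
def gainOpt (st : X → S) (M : MDP S X) : ℝ :=
  sSup {g : ℝ | ∃ π, IsPolicy st π ∧ ∃ s, g = gain st M π s}

/-- gain-optimal (stationary) policies, membership in `Π*(M)` -/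
def GainOptimal (st : X → S) (M : MDP S X) (π : S → X → ℝ) : Prop :=
  IsPolicy st π ∧ ∀ s, gain st M π s = gainOpt st M

/-- the gap `Δ*(x; M)` of the pair `x`, relative to a bias function `h` -/
def gap (st : X → S) (M : MDP S X) (h : S → ℝ) (x : X) : ℝ :=
  gainOpt st M + h (st x) - rbar M x - ∑ s', (M.p x {s'}).toReal * h s'

/-- `h` is an optimal bias function of `M`: it satisfies the average-reward Bellman
optimality equation `g*(M) + h(s) = max_{x ∈ A(s)} (r(x) + Σ_{s'} p(s'|x) h(s'))`. -/
def IsOptBias (st : X → S) (M : MDP S X) (h : S → ℝ) : Prop :=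
  (∀ x, 0 ≤ gap st M h x) ∧ ∀ s, ∃ x, st x = s ∧ gap st M h x = 0

/-- one-step reachability in `M` (via some pair) -/
def commStep (st : X → S) (M : MDP S X) (s s' : S) : Prop :=
  ∃ x, st x = s ∧ M.p x {s'} ≠ 0

/-- `M` is communicating: every state is reachable from every other state -/
def Communicating (st : X → S) (M : MDP S X) : Prop :=
  ∀ s s', Relation.ReflTransGen (commStep st M) s s'

/-- one-step transition relation of the Markov chain induced by the policy `π` -/
def polRel (st : X → S) (M : MDP S X) (π : S → X → ℝ) (s s' : S) : Prop :=
  ∃ x, st x = s ∧ π s x ≠ 0 ∧ M.p x {s'} ≠ 0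

/-- a state is recurrent for the chain induced by `π` iff it communicates back
with everything it can reach (the standard combinatorial characterization for
finite Markov chains) -/
def recurrentState (st : X → S) (M : MDP S X) (π : S → X → ℝ) (s : S) : Prop :=
  ∀ s', Relation.ReflTransGen (polRel st M π) s s' → Relation.ReflTransGen (polRel st M π) s' s

/-- the recurrent pairs `X_π` of a stationary policy `π` -/
def recurrentPairs (st : X → S) (M : MDP S X) (π : S → X → ℝ) : Set X :=
  {x | recurrentState st M π (st x) ∧ π (st x) x ≠ 0}

/-- the policy playing uniformly among weakly optimal pairs (`gap = 0`) at every state -/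
def uniformOpt (st : X → S) (M : MDP S X) (h : S → ℝ) : S → X → ℝ := fun s x =>
  if st x = s ∧ gap st M h x = 0 then
    (1 : ℝ) / (Finset.univ.filter (fun y => st y = s ∧ gap st M h y = 0)).card
  else 0

/-- the optimal pairs `X*(M)`: recurrent pairs of the uniformly-weakly-optimal policy -/
def optPairs (st : X → S) (M : MDP S X) (h : S → ℝ) : Set X :=
  recurrentPairs st M (uniformOpt st M h)

/-- Kullback-Leibler divergence of two measures -/
def klDiv {α : Type} [MeasurableSpace α] (μ ν : Measure α) : ℝ≥0∞ :=
  if μ ≪ ν ∧ Integrable (llr μ ν) μ then ENNReal.ofReal (∫ z, llr μ ν z ∂μ) else ⊤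

/-- `KL_x(M‖M†) = KL(p(·|x)‖p†(·|x)) + KL(r(·|x)‖r†(·|x))` -/
def KLx (M M' : MDP S X) (x : X) : ℝ≥0∞ :=
  klDiv (M.p x) (M'.p x) + klDiv (M.r x) (M'.r x)

/-- `M† ≫ M` : absolute continuity of kernels and rewards at every pair -/
def Dominates (M' M : MDP S X) : Prop := ∀ x : X, M.p x ≪ M'.p x ∧ M.r x ≪ M'.r x

/-- the alternative set `Alt(M)` -/
def AltSet (st : X → S) (𝕄 : Set (MDP S X)) (M : MDP S X) : Set (MDP S X) :=
  {M' | M' ∈ 𝕄 ∧ Dominates M' M ∧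
    ¬ ∃ π : S → X → ℝ, GainOptimal st M' π ∧ GainOptimal st M π}

/-- the confusing set `Cnf(M)` (relative to the bias function `h` of `M`) -/
def CnfSet (st : X → S) (𝕄 : Set (MDP S X)) (M : MDP S X) (h : S → ℝ) : Set (MDP S X) :=
  {M' | M' ∈ AltSet st 𝕄 M ∧ ∀ x ∈ optPairs st M h, M'.p x = M.p x ∧ M'.r x = M.r x}

/-- invariant measures `Φ(M)` of `M` (as vectors on the pair space) -/
def InvMeasure (st : X → S) (M : MDP S X) (μ : X → ℝ) : Prop :=
  (∀ x, 0 ≤ μ x) ∧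
    ∀ s : S, ∑ x ∈ Finset.univ.filter (fun x => st x = s), μ x
      = ∑ x, μ x * (M.p x {s}).toReal

/-- reachability using only pairs of `X0` -/
def reachIn (st : X → S) (M : MDP S X) (X0 : Set X) (s s' : S) : Prop :=
  Relation.ReflTransGen (fun a b => ∃ x ∈ X0, st x = a ∧ M.p x {b} ≠ 0) s s'

/-- states of the minor `M/X0`: `s` and `s'` are merged iff they lie in a common
communicating component of `X0` -/
def minorEq (st : X → S) (M : MDP S X) (X0 : Set X) (s s' : S) : Prop :=
  s = s' ∨ ((∃ x ∈ X0, st x = s) ∧ (∃ x ∈ X0, st x = s') ∧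
    reachIn st M X0 s s' ∧ reachIn st M X0 s' s)

/-- invariant measures `Φ(M/X0)` of the minor `M/X0`, viewed as vectors indexed by `X`
(for every state `[s]` of the minor, `Σ_a μ([s],a) = Σ_x μ(x)·[p]([s]|x)`). -/
def MinorInvMeasure (st : X → S) (M : MDP S X) (X0 : Set X) (μ : X → ℝ) : Prop :=
  (∀ x, 0 ≤ μ x) ∧
    ∀ s : S, ∑ x ∈ Finset.univ.filter (fun x => minorEq st M X0 (st x) s), μ x
      = ∑ x, μ x * ∑ s' ∈ Finset.univ.filter (fun s' => minorEq st M X0 s' s),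
          (M.p x {s'}).toReal

/-- `X0` is a closed set of pairs: playing pairs of `X0` one remains in the states
spawned by `X0`, and the restriction of `M` to `X0` has no transient states. -/
def IsClosedPairs (st : X → S) (M : MDP S X) (X0 : Set X) : Prop :=
  (∀ x ∈ X0, M.p x {s | ∃ y ∈ X0, st y = s} = 1) ∧
    (∀ s s', (∃ y ∈ X0, st y = s) → reachIn st M X0 s s' → reachIn st M X0 s' s)

/-! ### Learning agents, trajectories and induced laws -/

/-- the pair played at step `n` (`= X_{n+1}` in 1-based time) -/
def pairAt (n : ℕ) (ω : ℕ → X × ℝ) : X := (ω n).1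

/-- the reward received at step `n` (`= R_{n+1}` in 1-based time) -/
def rewAt (n : ℕ) (ω : ℕ → X × ℝ) : ℝ := (ω n).2

/-- the history of the first `n` completed steps -/
def hist (n : ℕ) (ω : ℕ → X × ℝ) : Fin n → X × ℝ := fun i => ω i

/-- A learning agent: a history-dependent randomized policy.  Given the history of the
first `n` steps and the current state, it picks the next pair (measurably), supported on
the pairs of the current state. -/
structure Agent (S X : Type) [MeasurableSpace S] [MeasurableSpace X] (st : X → S) where
  policy : (n : ℕ) → Kernel ((Fin n → X × ℝ) × S) X
  policy_markov : ∀ n, IsMarkovKernel (policy n)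
  policy_supp : ∀ n y s, policy n (y, s) {x | st x = s} = 1

/-- `P` is the law `P^{M,A}_{s0}` of the trajectory of the agent `A` on the MDP `M`
started at `s0`: the first state is `s0`, rewards and next states are generated by `M`,
and pairs are chosen by the policy of `A` given the history and the current state. -/
def IsLawOf (st : X → S) (M : MDP S X) (A : Agent S X st) (s0 : S)
    (P : Measure (ℕ → X × ℝ)) : Prop :=
  IsProbabilityMeasure P ∧
  -- initial step: `S_1 = s0` and `X_1 ~ A.policy 0 (∅, s0)`
  (∀ x : X, P {ω | pairAt 0 ω = x} = A.policy 0 (fun i => i.elim0, s0) {x}) ∧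
  -- environment step: given the history and `X_{n+1}`, the reward `R_{n+1}` has law
  -- `r(·|X_{n+1})` and the next state `S_{n+2}` has law `p(·|X_{n+1})`, independently
  (∀ n : ℕ, ∀ φ : (Fin n → X × ℝ) × X → ℝ≥0∞, Measurable φ →
    ∀ f : ℝ → ℝ≥0∞, Measurable f → ∀ s : S,
    ∫⁻ ω, φ (hist n ω, pairAt n ω) * f (rewAt n ω) *
        (if st (pairAt (n+1) ω) = s then 1 else 0) ∂P
      = ∫⁻ ω, φ (hist n ω, pairAt n ω) * (∫⁻ t, f t ∂(M.r (pairAt n ω))) *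
          (M.p (pairAt n ω) {s}) ∂P) ∧
  -- agent step: given the history and the new state, the next pair is chosen by the policy
  (∀ n : ℕ, ∀ ψ : (Fin (n+1) → X × ℝ) → ℝ≥0∞, Measurable ψ → ∀ x : X,
    ∫⁻ ω, ψ (hist (n+1) ω) * (if pairAt (n+1) ω = x then 1 else 0) ∂P
      = ∫⁻ ω, ψ (hist (n+1) ω) * (if st (pairAt (n+1) ω) = st x then 1 else 0) *
          (A.policy (n+1) (hist (n+1) ω, st x) {x}) ∂P)

/-- the number of visits `N_T(x) = Σ_{t=1}^{T-1} 1{X_t = x}` -/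
def nvis (T : ℕ) (x : X) (ω : ℕ → X × ℝ) : ℕ :=
  ∑ k ∈ Finset.range (T - 1), if pairAt k ω = x then 1 else 0

/-- the regret `Reg(T; M, A, s0) = T·g*(M) − E[Σ_{t=1}^T R_t]` of a trajectory law `P` -/
def regret (st : X → S) (M : MDP S X) (P : Measure (ℕ → X × ℝ)) (T : ℕ) : ℝ :=
  T * gainOpt st M - ∫ ω, (∑ k ∈ Finset.range T, rewAt k ω) ∂P

/-- the agent `A` is consistent on `𝕄`: its regret is `o(T^η)` on every model of `𝕄`,
from every initial state, for every `η > 0` -/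
def Consistent (st : X → S) (𝕄 : Set (MDP S X)) (A : Agent S X st) : Prop :=
  ∀ M' ∈ 𝕄, ∀ s0 : S, ∀ P : Measure (ℕ → X × ℝ), IsLawOf st M' A s0 P →
    ∀ η : ℝ, 0 < η →
      (fun T : ℕ => regret st M' P T) =o[atTop] (fun T : ℕ => (T : ℝ) ^ η)

end MDPTheory
namespace MDPTheory

variable {S X : Type} [Fintype S] [MeasurableSpace S] [MeasurableSingletonClass S]
  [Fintype X] [MeasurableSpace X] [MeasurableSingletonClass X]

set_option linter.unusedSectionVars false
open Matrix



section MarkovMatrix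

variable {ι : Type} [Fintype ι] [Nonempty ι] {Q : Matrix ι ι ℝ}

lemma vecMul_apply (v : ι → ℝ) (b : ι) : (v ᵥ* Q) b = ∑ a, v a * Q a b := by
  simp [Matrix.vecMul, dotProduct]

lemma absInvariant (hQ0 : ∀ a b, 0 ≤ Q a b) (hQ1 : ∀ a, ∑ b, Q a b = 1)
    {v : ι → ℝ} (hv : v ᵥ* Q = v) :
    (fun i => |v i|) ᵥ* Q = fun i => |v i| := by
  have key : ∀ b, |v b| ≤ ((fun i => |v i|) ᵥ* Q) b := by
    intro b
    rw [vecMul_apply]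
    calc |v b| = |(v ᵥ* Q) b| := by rw [hv]
    _ = |∑ a, v a * Q a b| := by rw [vecMul_apply]
    _ ≤ ∑ a, |v a * Q a b| := Finset.abs_sum_le_sum_abs _ _
    _ = ∑ a, |v a| * Q a b := by
        refine Finset.sum_congr rfl fun a _ => ?_
        rw [abs_mul, abs_of_nonneg (hQ0 a b)]
  have hsum : ∑ b, (((fun i => |v i|) ᵥ* Q) b - |v b|) = 0 := by
    have h1 : ∑ b, ((fun i => |v i|) ᵥ* Q) b = ∑ a, |v a| := by
      simp only [vecMul_apply]
      rw [Finset.sum_comm]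
      refine Finset.sum_congr rfl fun a _ => ?_
      rw [← Finset.mul_sum, hQ1, mul_one]
    rw [Finset.sum_sub_distrib, h1, sub_self]
  have hz := (Finset.sum_eq_zero_iff_of_nonneg
    (fun b _ => sub_nonneg.2 (key b))).1 hsum
  funext b
  have := hz b (Finset.mem_univ b)
  linarith [this]

lemma posPropagation (hQ0 : ∀ a b, 0 ≤ Q a b)
    {v : ι → ℝ} (h0 : ∀ i, 0 ≤ v i) (hv : v ᵥ* Q = v) {a b : ι}
    (ha : 0 < v a) (hab : Relation.ReflTransGen (fun a b => 0 < Q a b) a b) :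
    0 < v b := by
  induction hab with
  | refl => exact ha
  | tail _ hcd ih =>
    rename_i c d _
    have : v c * Q c d ≤ (v ᵥ* Q) d := by
      rw [vecMul_apply]
      exact Finset.single_le_sum (fun i _ => mul_nonneg (h0 i) (hQ0 i d))
        (Finset.mem_univ c)
    rw [hv] at this
    exact lt_of_lt_of_le (mul_pos ih hcd) this

lemma existsPosInvariant (hQ0 : ∀ a b, 0 ≤ Q a b) (hQ1 : ∀ a, ∑ b, Q a b = 1)
    (hirr : ∀ a b : ι, Relation.ReflTransGen (fun a b => 0 < Q a b) a b) :
    ∃ π : ι → ℝ, (∀ i, 0 < π i) ∧ π ᵥ* Q = π := by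
  have hdet : (1 - Q).det = 0 := by
    rw [← Matrix.exists_mulVec_eq_zero_iff]
    refine ⟨fun _ => 1, ?_, ?_⟩
    · intro h
      have := congrFun h (Classical.arbitrary ι)
      norm_num at this
    · funext a
      simp only [Matrix.mulVec, dotProduct, Matrix.sub_apply, Pi.zero_apply]
      simp only [sub_mul, mul_one]
      rw [Finset.sum_sub_distrib]
      have : ∑ b, (1 : Matrix ι ι ℝ) a b = 1 := by
        simp [Matrix.one_apply]
      rw [this, hQ1, sub_self]
  obtain ⟨v, hv0, hv⟩ := Matrix.exists_vecMul_eq_zero_iff.2 hdet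
  have hvinv : v ᵥ* Q = v := by
    have := hv
    rw [Matrix.vecMul_sub, Matrix.vecMul_one, sub_eq_zero] at this
    exact this.symm
  have habs : (fun i => |v i|) ᵥ* Q = fun i => |v i| := absInvariant hQ0 hQ1 hvinv
  obtain ⟨a, hva⟩ : ∃ a, v a ≠ 0 := Function.ne_iff.1 hv0
  refine ⟨fun i => |v i|, fun i => ?_, habs⟩
  exact posPropagation hQ0 (fun i => abs_nonneg _) habs (abs_pos.2 hva) (hirr a i)

lemma uniqueInvariant (hQ0 : ∀ a b, 0 ≤ Q a b) (hQ1 : ∀ a, ∑ b, Q a b = 1)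
    (hirr : ∀ a b : ι, Relation.ReflTransGen (fun a b => 0 < Q a b) a b)
    {π : ι → ℝ} (hπpos : ∀ i, 0 < π i) (hπ : π ᵥ* Q = π)
    {v : ι → ℝ} (hv : v ᵥ* Q = v) : ∃ c : ℝ, v = c • π := by
  classical
  set a₀ := Classical.arbitrary ι
  set c := v a₀ / π a₀ with hc
  refine ⟨c, ?_⟩
  by_contra hne
  set u := v - c • π with hu
  have hu0 : u ≠ 0 := fun h => hne (by rwa [hu, sub_eq_zero] at h)
  have hsm : (c • π) ᵥ* Q = c • (π ᵥ* Q) := by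
    funext b; simp [vecMul_apply, Finset.mul_sum, mul_assoc]
  have huinv : u ᵥ* Q = u := by
    rw [hu, Matrix.sub_vecMul, hsm, hπ, hv]
  have hua₀ : u a₀ = 0 := by
    have hπ0 : π a₀ ≠ 0 := (hπpos a₀).ne'
    simp only [hu, Pi.sub_apply, Pi.smul_apply, smul_eq_mul, hc]
    field_simp
    ring
  obtain ⟨i, hui⟩ : ∃ i, u i ≠ 0 := Function.ne_iff.1 hu0
  have habs : (fun i => |u i|) ᵥ* Q = fun i => |u i| := by
    exact absInvariant hQ0 hQ1 huinv
  have := posPropagation hQ0 (fun i => abs_nonneg _) habs (abs_pos.2 hui) (hirr i a₀)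
  rw [hua₀] at this
  simp at this

lemma surjOnZeroSum (hQ0 : ∀ a b, 0 ≤ Q a b) (hQ1 : ∀ a, ∑ b, Q a b = 1)
    (hirr : ∀ a b : ι, Relation.ReflTransGen (fun a b => 0 < Q a b) a b)
    (b : ι → ℝ) (hb : ∑ i, b i = 0) :
    ∃ v : ι → ℝ, v - v ᵥ* Q = b := by
  classical
  obtain ⟨π, hπpos, hπ⟩ := existsPosInvariant hQ0 hQ1 hirr
  set f : (ι → ℝ) →ₗ[ℝ] (ι → ℝ) := LinearMap.id - Q.vecMulLinear with hf
  have hfapp : ∀ v, f v = v - v ᵥ* Q := by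
    intro v; simp [hf, Matrix.vecMulLinear]
  set g : (ι → ℝ) →ₗ[ℝ] ℝ :=
    { toFun := fun v => ∑ i, v i
      map_add' := by intro x y; simp [Finset.sum_add_distrib]
      map_smul' := by intro c x; simp [Finset.mul_sum] } with hg
  have hπ0 : π ≠ 0 := by
    intro h
    have := hπpos (Classical.arbitrary ι)
    rw [h] at this; simp at this
  -- kernel of f is the span of π
  have hker : LinearMap.ker f = Submodule.span ℝ {π} := by
    apply le_antisymm
    · intro v hv
      rw [LinearMap.mem_ker, hfapp, sub_eq_zero] at hv
      obtain ⟨c, hc⟩ := uniqueInvariant hQ0 hQ1 hirr hπpos hπ hv.symm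
      exact Submodule.mem_span_singleton.2 ⟨c, hc.symm⟩
    · rw [Submodule.span_singleton_le_iff_mem, LinearMap.mem_ker, hfapp, hπ,
        sub_self]
  have hrange : LinearMap.range f ≤ LinearMap.ker g := by
    rintro w ⟨v, rfl⟩
    rw [LinearMap.mem_ker, hfapp]
    show ∑ i, (v - v ᵥ* Q) i = 0
    simp only [Pi.sub_apply]
    rw [Finset.sum_sub_distrib]
    have : ∑ i, (v ᵥ* Q) i = ∑ a, v a := by
      simp only [vecMul_apply]
      rw [Finset.sum_comm]
      refine Finset.sum_congr rfl fun a _ => ?_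
      rw [← Finset.mul_sum, hQ1, mul_one]
    rw [this, sub_self]
  have hgsurj : Function.Surjective g := by
    intro c
    refine ⟨fun _ => c / (Fintype.card ι : ℝ), ?_⟩
    have hcard : (Fintype.card ι : ℝ) ≠ 0 := by
      exact_mod_cast Fintype.card_ne_zero
    show ∑ _i : ι, c / (Fintype.card ι : ℝ) = c
    rw [Finset.sum_const, Finset.card_univ, nsmul_eq_mul]
    field_simp
  have h1 := LinearMap.finrank_range_add_finrank_ker f
  have h2 := LinearMap.finrank_range_add_finrank_ker g
  have hkf : Module.finrank ℝ ↥(LinearMap.ker f) = 1 := by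
    rw [hker]; exact finrank_span_singleton hπ0
  have hrg : Module.finrank ℝ ↥(LinearMap.range g) = 1 := by
    rw [LinearMap.range_eq_top.2 hgsurj]
    simp [Module.finrank_self]
  have heq : LinearMap.range f = LinearMap.ker g := by
    refine Submodule.eq_of_le_of_finrank_eq hrange ?_
    omega
  have hbmem : b ∈ LinearMap.ker g := by
    rw [LinearMap.mem_ker]; exact hb
  rw [← heq] at hbmem
  obtain ⟨v, hv⟩ := hbmem
  exact ⟨v, by rw [← hfapp, hv]⟩

end MarkovMatrix

section MDPAux

variable (st : X → S) (M : MDP S X) (h : S → ℝ)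

/-- divergence of a vector at a state -/
def Dv (μ : X → ℝ) (s : S) : ℝ :=
  ∑ x ∈ Finset.univ.filter (fun x => st x = s), μ x - ∑ x, μ x * (M.p x {s}).toReal

/-- divergence in the minor -/
def Dm (X0 : Set X) (μ : X → ℝ) (s : S) : ℝ :=
  ∑ x ∈ Finset.univ.filter (fun x => minorEq st M X0 (st x) s), μ x
    - ∑ x, μ x * ∑ s' ∈ Finset.univ.filter (fun s' => minorEq st M X0 s' s),
        (M.p x {s'}).toReal

lemma invMeasure_iff (μ : X → ℝ) :
    InvMeasure st M μ ↔ (∀ x, 0 ≤ μ x) ∧ ∀ s, Dv st M μ s = 0 := by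
  unfold InvMeasure Dv
  constructor
  · rintro ⟨h1, h2⟩; exact ⟨h1, fun s => sub_eq_zero.2 (h2 s)⟩
  · rintro ⟨h1, h2⟩; exact ⟨h1, fun s => sub_eq_zero.1 (h2 s)⟩

lemma minorInvMeasure_iff (X0 : Set X) (μ : X → ℝ) :
    MinorInvMeasure st M X0 μ ↔ (∀ x, 0 ≤ μ x) ∧ ∀ s, Dm st M X0 μ s = 0 := by
  unfold MinorInvMeasure Dm
  constructor
  · rintro ⟨h1, h2⟩; exact ⟨h1, fun s => sub_eq_zero.2 (h2 s)⟩
  · rintro ⟨h1, h2⟩; exact ⟨h1, fun s => sub_eq_zero.1 (h2 s)⟩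

lemma p_ne_top (x : X) (A : Set S) : M.p x A ≠ ⊤ := by
  haveI := M.p_prob x
  exact MeasureTheory.measure_ne_top _ _

lemma p_toReal_eq_zero_iff (x : X) (s' : S) :
    (M.p x {s'}).toReal = 0 ↔ M.p x {s'} = 0 := by
  rw [ENNReal.toReal_eq_zero_iff]
  have := p_ne_top M x {s'}
  tauto

lemma sum_p_one (x : X) : ∑ s' : S, (M.p x {s'}).toReal = 1 := by
  haveI := M.p_prob x
  have h1 : ∑ s' : S, M.p x {s'} = M.p x Set.univ := by
    rw [← measure_biUnion_finset _ (fun s _ => measurableSet_singleton s)]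
    · congr 1; simp [Set.eq_univ_iff_forall]
    · intro a _ b _ hab
      simp [Function.onFun, Set.disjoint_singleton, hab]
  rw [measure_univ] at h1
  rw [← ENNReal.toReal_sum (fun a _ => MeasureTheory.measure_ne_top _ _), h1]
  simp

lemma minorEq_refl (X0 : Set X) (s : S) : minorEq st M X0 s s := Or.inl rfl

lemma minorEq_symm {X0 : Set X} {a b : S} (hab : minorEq st M X0 a b) :
    minorEq st M X0 b a := by
  rcases hab with rfl | ⟨h1, h2, h3, h4⟩
  · exact Or.inl rfl
  · exact Or.inr ⟨h2, h1, h4, h3⟩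

lemma minorEq_trans {X0 : Set X} {a b c : S} (hab : minorEq st M X0 a b)
    (hbc : minorEq st M X0 b c) : minorEq st M X0 a c := by
  rcases hab with rfl | ⟨h1, h2, h3, h4⟩
  · exact hbc
  · rcases hbc with rfl | ⟨h1', h2', h3', h4'⟩
    · exact Or.inr ⟨h1, h2, h3, h4⟩
    · exact Or.inr ⟨h1, h2', h3.trans h3', h4'.trans h4⟩

lemma minorEq_class {X0 : Set X} {a b : S} (hab : minorEq st M X0 a b) (c : S) :
    minorEq st M X0 c a ↔ minorEq st M X0 c b :=
  ⟨fun hca => minorEq_trans st M hca hab,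
   fun hcb => minorEq_trans st M hcb (minorEq_symm st M hab)⟩

lemma Dm_eq_sum_Dv (X0 : Set X) (μ : X → ℝ) (s : S) :
    Dm st M X0 μ s
      = ∑ s' ∈ Finset.univ.filter (fun s' => minorEq st M X0 s' s), Dv st M μ s' := by
  unfold Dm Dv
  rw [Finset.sum_sub_distrib]
  congr 1
  · rw [Finset.sum_fiberwise_eq_sum_filter Finset.univ
      (Finset.univ.filter (fun s' => minorEq st M X0 s' s)) st μ]
    apply Finset.sum_congr
    · apply Finset.filter_congr
      intro x _
      simp
    · intros; rfl
  · simp_rw [Finset.mul_sum]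
    rw [Finset.sum_comm]

lemma uniformOpt_nonneg (s : S) (x : X) : 0 ≤ uniformOpt st M h s x := by
  unfold uniformOpt
  split
  · positivity
  · exact le_refl 0

lemma uniformOpt_ne_zero_iff {s : S} {x : X} :
    uniformOpt st M h s x ≠ 0 ↔ (st x = s ∧ gap st M h x = 0) := by
  unfold uniformOpt
  split
  · rename_i hx
    constructor
    · intro _; exact hx
    · intro _
      have hcard : 0 < (Finset.univ.filter
          (fun y => st y = s ∧ gap st M h y = 0)).card := by
        apply Finset.card_pos.2
        exact ⟨x, by simp [hx.1, hx.2]⟩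
      positivity
  · rename_i hx
    simp [hx]

lemma uniformOpt_pos {s : S} {x : X} (hx : st x = s ∧ gap st M h x = 0) :
    0 < uniformOpt st M h s x :=
  lt_of_le_of_ne (uniformOpt_nonneg st M h s x)
    (Ne.symm ((uniformOpt_ne_zero_iff st M h).2 hx))

lemma sum_uniformOpt {s : S} (hs : ∃ y, st y = s ∧ gap st M h y = 0) :
    ∑ x, uniformOpt st M h s x = 1 := by
  unfold uniformOpt
  rw [← Finset.sum_filter]
  rw [Finset.sum_const, nsmul_eq_mul]
  have hcard : ((Finset.univ.filter
      (fun y => st y = s ∧ gap st M h y = 0)).card : ℝ) ≠ 0 := by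
    obtain ⟨y, hy⟩ := hs
    have : 0 < (Finset.univ.filter
        (fun y => st y = s ∧ gap st M h y = 0)).card := by
      apply Finset.card_pos.2
      exact ⟨y, by simp [hy.1, hy.2]⟩
    positivity
  field_simp

lemma mem_optPairs_iff {x : X} :
    x ∈ optPairs st M h ↔
      recurrentState st M (uniformOpt st M h) (st x) ∧ gap st M h x = 0 := by
  unfold optPairs recurrentPairs
  simp only [Set.mem_setOf_eq]
  constructor
  · rintro ⟨h1, h2⟩
    exact ⟨h1, ((uniformOpt_ne_zero_iff st M h).1 h2).2⟩
  · rintro ⟨h1, h2⟩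
    exact ⟨h1, (uniformOpt_ne_zero_iff st M h).2 ⟨rfl, h2⟩⟩

lemma rec_reach {s t : S}
    (hrec : recurrentState st M (uniformOpt st M h) s)
    (hreach : Relation.ReflTransGen (polRel st M (uniformOpt st M h)) s t) :
    recurrentState st M (uniformOpt st M h) t := by
  intro t' ht'
  exact (hrec t' (hreach.trans ht')).trans hreach

lemma mem_X0_polRel {x : X} {s' : S} (hx : x ∈ optPairs st M h)
    (hp : M.p x {s'} ≠ 0) : polRel st M (uniformOpt st M h) (st x) s' :=
  ⟨x, rfl, hx.2, hp⟩

lemma spawned_rec {s : S} (hs : ∃ y ∈ optPairs st M h, st y = s) :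
    recurrentState st M (uniformOpt st M h) s := by
  obtain ⟨y, hy, rfl⟩ := hs
  exact hy.1

lemma rec_spawned (hbias : IsOptBias st M h) {s : S}
    (hrec : recurrentState st M (uniformOpt st M h) s) :
    ∃ y ∈ optPairs st M h, st y = s := by
  obtain ⟨x, hx1, hx2⟩ := hbias.2 s
  refine ⟨x, (mem_optPairs_iff st M h).2 ⟨?_, hx2⟩, hx1⟩
  rw [hx1]; exact hrec

lemma reachIn_to_pol {s t : S}
    (hr : reachIn st M (optPairs st M h) s t) :
    Relation.ReflTransGen (polRel st M (uniformOpt st M h)) s t := by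
  refine Relation.ReflTransGen.mono ?_ _ _ hr
  rintro a b ⟨x, hx0, hxa, hxp⟩
  exact ⟨x, hxa, hxa ▸ hx0.2, hxp⟩

lemma pol_to_reachIn {s t : S}
    (hrec : recurrentState st M (uniformOpt st M h) s)
    (hreach : Relation.ReflTransGen (polRel st M (uniformOpt st M h)) s t) :
    reachIn st M (optPairs st M h) s t := by
  induction hreach with
  | refl => exact Relation.ReflTransGen.refl
  | tail hab hbc ih =>
    rename_i b c
    have hbrec := rec_reach st M h hrec hab
    obtain ⟨x, hxb, hπ, hp⟩ := hbc
    have hgap := (uniformOpt_ne_zero_iff st M h).1 (hxb ▸ hπ)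
    have hx0 : x ∈ optPairs st M h :=
      (mem_optPairs_iff st M h).2 ⟨hxb ▸ hbrec, hgap.2⟩
    exact ih.tail ⟨x, hx0, hxb, hp⟩

lemma step_minorEq (hbias : IsOptBias st M h) {x : X} {s' : S}
    (hx : x ∈ optPairs st M h) (hp : M.p x {s'} ≠ 0) :
    minorEq st M (optPairs st M h) (st x) s' := by
  have hrec : recurrentState st M (uniformOpt st M h) (st x) := hx.1
  have hstep : polRel st M (uniformOpt st M h) (st x) s' := mem_X0_polRel st M h hx hp
  have hs'rec : recurrentState st M (uniformOpt st M h) s' :=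
    rec_reach st M h hrec (Relation.ReflTransGen.single hstep)
  refine Or.inr ⟨rec_spawned st M h hbias hrec, rec_spawned st M h hbias hs'rec, ?_, ?_⟩
  · exact Relation.ReflTransGen.single ⟨x, hx, rfl, hp⟩

  · exact pol_to_reachIn st M h hs'rec (hrec s' (Relation.ReflTransGen.single hstep))

lemma p_zero_of_not_minorEq (hbias : IsOptBias st M h) {x : X} {s' : S}
    (hx : x ∈ optPairs st M h)
    (hne : ¬ minorEq st M (optPairs st M h) (st x) s') :
    (M.p x {s'}).toReal = 0 := by
  rw [p_toReal_eq_zero_iff]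
  by_contra hp
  exact hne (step_minorEq st M h hbias hx hp)

lemma sum_p_class (hbias : IsOptBias st M h) {x : X}
    (hx : x ∈ optPairs st M h) (s : S) :
    ∑ s' ∈ Finset.univ.filter (fun s' => minorEq st M (optPairs st M h) s' s),
        (M.p x {s'}).toReal
      = if minorEq st M (optPairs st M h) (st x) s then 1 else 0 := by
  split
  · rename_i hmem
    have hfilter : Finset.univ.filter (fun s' => minorEq st M (optPairs st M h) s' s)
        = Finset.univ.filter (fun s' => minorEq st M (optPairs st M h) s' (st x)) := by
      apply Finset.filter_congr
      intro s' _
      exact (minorEq_class st M (minorEq_symm st M hmem) s')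
    rw [hfilter]
    have hsplit := Finset.sum_filter_add_sum_filter_not Finset.univ
      (fun s' => minorEq st M (optPairs st M h) s' (st x))
      (fun s' => (M.p x {s'}).toReal)
    have hzero : ∑ s' ∈ Finset.univ.filter
        (fun s' => ¬ minorEq st M (optPairs st M h) s' (st x)), (M.p x {s'}).toReal = 0 := by
      apply Finset.sum_eq_zero
      intro s' hs'
      simp only [Finset.mem_filter] at hs'
      exact p_zero_of_not_minorEq st M h hbias hx
        (fun hcon => hs'.2 (minorEq_symm st M hcon))
    rw [hzero, add_zero] at hsplit
    rw [hsplit, sum_p_one]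
  · rename_i hmem
    apply Finset.sum_eq_zero
    intro s' hs'
    simp only [Finset.mem_filter] at hs'
    apply p_zero_of_not_minorEq st M h hbias hx
    intro hcon
    exact hmem (minorEq_trans st M hcon hs'.2)

lemma Dm_inner (hbias : IsOptBias st M h) {μ : X → ℝ}
    (hsupp : ∀ x, x ∉ optPairs st M h → μ x = 0) (s : S) :
    Dm st M (optPairs st M h) μ s = 0 := by
  unfold Dm
  rw [Finset.sum_filter, sub_eq_zero]
  apply Finset.sum_congr rfl
  intro x _
  by_cases hx : x ∈ optPairs st M h
  · rw [sum_p_class st M h hbias hx s]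
    split <;> simp
  · simp [hsupp x hx]

lemma Dv_add (μ ν : X → ℝ) (s : S) :
    Dv st M (fun x => μ x + ν x) s = Dv st M μ s + Dv st M ν s := by
  unfold Dv
  simp only [add_mul]
  rw [Finset.sum_add_distrib, Finset.sum_add_distrib]
  ring

lemma Dv_sum {α : Type} (A : Finset α) (f : α → X → ℝ) (s : S) :
    Dv st M (fun x => ∑ r ∈ A, f r x) s = ∑ r ∈ A, Dv st M (f r) s := by
  unfold Dv
  simp only [Finset.sum_mul]
  rw [Finset.sum_comm, Finset.sum_comm (s := Finset.univ) (t := A)]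
  rw [Finset.sum_sub_distrib]

lemma Dm_add (X0 : Set X) (μ ν : X → ℝ) (s : S) :
    Dm st M X0 (fun x => μ x + ν x) s = Dm st M X0 μ s + Dm st M X0 ν s := by
  unfold Dm
  simp only [add_mul]
  rw [Finset.sum_add_distrib, Finset.sum_add_distrib]
  ring

lemma comp_solution (hbias : IsOptBias st M h) (s0 : S)
    (hs0 : ∃ y ∈ optPairs st M h, st y = s0) (b : S → ℝ)
    (hbsum : ∑ s ∈ Finset.univ.filter
        (fun s => minorEq st M (optPairs st M h) s s0), b s = 0) :
    ∃ m : X → ℝ, (∀ x, 0 ≤ m x) ∧ (∀ x, x ∉ optPairs st M h → m x = 0) ∧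
      (∀ s, minorEq st M (optPairs st M h) s s0 → Dv st M m s = - b s) ∧
      (∀ s, ¬ minorEq st M (optPairs st M h) s s0 → Dv st M m s = 0) := by
  classical
  set X0 := optPairs st M h with hX0def
  let ι := {s : S // minorEq st M X0 s s0}
  haveI : Nonempty ι := ⟨⟨s0, minorEq_refl st M X0 s0⟩⟩
  -- all states of the component are recurrent
  have hrecC : ∀ s, minorEq st M X0 s s0 →
      recurrentState st M (uniformOpt st M h) s := by
    intro s hs
    rcases hs with rfl | ⟨hsp, _, _, _⟩
    · exact spawned_rec st M h hs0
    · exact spawned_rec st M h hsp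
  -- membership in X0 for pairs of the component
  have hmemX0 : ∀ (x : X), minorEq st M X0 (st x) s0 →
      (uniformOpt st M h (st x) x ≠ 0 ↔ x ∈ X0) := by
    intro x hx
    constructor
    · intro hne
      exact (mem_optPairs_iff st M h).2 ⟨hrecC _ hx,
        ((uniformOpt_ne_zero_iff st M h).1 hne).2⟩
    · intro hmem
      exact hmem.2
  let Q : Matrix ι ι ℝ := fun a b =>
    ∑ x ∈ Finset.univ.filter (fun x => st x = a.1),
      uniformOpt st M h a.1 x * (M.p x {b.1}).toReal
  have hQ0 : ∀ a b : ι, 0 ≤ Q a b := by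
    intro a b
    apply Finset.sum_nonneg
    intro x _
    exact mul_nonneg (uniformOpt_nonneg st M h _ _) ENNReal.toReal_nonneg
  have hQ1 : ∀ a : ι, ∑ b, Q a b = 1 := by
    intro a
    show ∑ b : ι, ∑ x ∈ Finset.univ.filter (fun x => st x = a.1),
      uniformOpt st M h a.1 x * (M.p x {b.1}).toReal = 1
    rw [Finset.sum_comm]
    have hterm : ∀ x ∈ Finset.univ.filter (fun x => st x = a.1),
        ∑ b : ι, uniformOpt st M h a.1 x * (M.p x {b.1}).toReal
          = uniformOpt st M h a.1 x := by
      intro x hx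
      simp only [Finset.mem_filter] at hx
      rw [← Finset.mul_sum]
      by_cases hne : uniformOpt st M h a.1 x = 0
      · simp [hne]
      · have hxX0 : x ∈ X0 := (hmemX0 x (hx.2 ▸ a.2)).1 (hx.2 ▸ hne)
        have hsum : ∑ b : ι, (M.p x {b.1}).toReal
            = ∑ s' ∈ Finset.univ.filter (fun s' => minorEq st M X0 s' s0),
                (M.p x {s'}).toReal :=
          (Finset.sum_subtype (p := fun s' => minorEq st M X0 s' s0) _
            (fun s' => by simp) (fun s' => (M.p x {s'}).toReal)).symm
        rw [hsum, sum_p_class st M h hbias hxX0 s0, if_pos (hx.2 ▸ a.2), mul_one]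
    rw [Finset.sum_congr rfl hterm]
    have : ∑ x ∈ Finset.univ.filter (fun x => st x = a.1), uniformOpt st M h a.1 x
        = ∑ x, uniformOpt st M h a.1 x := by
      apply Finset.sum_subset (Finset.subset_univ _)
      intro x _ hx
      simp only [Finset.mem_filter, Finset.mem_univ, true_and] at hx
      by_contra hne
      exact hx ((uniformOpt_ne_zero_iff st M h).1 hne).1
    rw [this, sum_uniformOpt st M h]
    obtain ⟨y, hy1, hy2⟩ := hbias.2 a.1
    exact ⟨y, hy1, hy2⟩
  -- positivity of single entries from reachIn-steps
  have hQpos : ∀ (c d : S) (hc : minorEq st M X0 c s0) (hd : minorEq st M X0 d s0)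
      (x : X), x ∈ X0 → st x = c → M.p x {d} ≠ 0 → 0 < Q ⟨c, hc⟩ ⟨d, hd⟩ := by
    intro c d hc hd x hxX0 hxc hxp
    apply Finset.sum_pos'
    · intro y _
      exact mul_nonneg (uniformOpt_nonneg st M h _ _) ENNReal.toReal_nonneg
    · refine ⟨x, by simp [hxc], ?_⟩
      apply mul_pos
      · exact uniformOpt_pos st M h ⟨hxc, ((mem_optPairs_iff st M h).1 hxX0).2⟩
      · exact ENNReal.toReal_pos hxp (p_ne_top M x {d})
  have hlift : ∀ (c : S) (hc : minorEq st M X0 c s0) (d : S),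
      reachIn st M X0 c d → ∃ hd : minorEq st M X0 d s0,
        Relation.ReflTransGen (fun a b : ι => 0 < Q a b) ⟨c, hc⟩ ⟨d, hd⟩ := by
    intro c hc d hreach
    induction hreach with
    | refl => exact ⟨hc, Relation.ReflTransGen.refl⟩
    | @tail d₁ d₂ hab hbc ih =>
      obtain ⟨hd1, path⟩ := ih
      obtain ⟨x, hxX0, hxd, hxp⟩ := hbc
      have hstep : minorEq st M X0 d₁ d₂ := hxd ▸ step_minorEq st M h hbias hxX0 hxp
      have hd2 : minorEq st M X0 d₂ s0 := minorEq_trans st M (minorEq_symm st M hstep) hd1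
      exact ⟨hd2, path.tail (hQpos d₁ d₂ hd1 hd2 x hxX0 hxd hxp)⟩
  have hirr : ∀ a b : ι, Relation.ReflTransGen (fun a b => 0 < Q a b) a b := by
    intro a b
    have hra : reachIn st M X0 a.1 s0 := by
      rcases a.2 with heq | ⟨_, _, hr, _⟩
      · rw [heq]; exact Relation.ReflTransGen.refl
      · exact hr
    have hrb : reachIn st M X0 s0 b.1 := by
      rcases b.2 with heq | ⟨_, _, _, hr⟩
      · rw [heq]; exact Relation.ReflTransGen.refl
      · exact hr
    obtain ⟨hd, path⟩ := hlift a.1 a.2 b.1 (hra.trans hrb)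
    have : (⟨a.1, a.2⟩ : ι) = a := rfl
    rw [this] at path
    have : (⟨b.1, hd⟩ : ι) = b := Subtype.ext rfl
    rwa [this] at path
  -- invariant measure and solvability
  obtain ⟨πv, hπpos, hπinv⟩ := existsPosInvariant hQ0 hQ1 hirr
  set c : ι → ℝ := fun i => - b i.1 with hcdef
  have hcsum : ∑ i, c i = 0 := by
    have : ∑ i : ι, b i.1 = ∑ s ∈ Finset.univ.filter
        (fun s => minorEq st M X0 s s0), b s :=
      (Finset.sum_subtype (p := fun s' => minorEq st M X0 s' s0) _
        (fun s' => by simp) b).symm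
    simp only [hcdef, Finset.sum_neg_distrib]
    rw [this, hbsum, neg_zero]
  obtain ⟨v, hv⟩ := surjOnZeroSum hQ0 hQ1 hirr c hcsum
  set K : ℝ := Finset.univ.sup' Finset.univ_nonempty (fun i => - v i / πv i) with hKdef
  set u : ι → ℝ := fun i => v i + K * πv i with hudef
  have hu0 : ∀ i, 0 ≤ u i := by
    intro i
    have hK : - v i / πv i ≤ K := by
      show - v i / πv i ≤ Finset.univ.sup' Finset.univ_nonempty (fun i => - v i / πv i)
      exact Finset.le_sup' (fun i => - v i / πv i) (Finset.mem_univ i)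
    have := (div_le_iff₀ (hπpos i)).1 hK
    simp only [hudef]
    linarith
  have huQ : ∀ i, u i - (u ᵥ* Q) i = c i := by
    intro i
    have hvm : (u ᵥ* Q) i = (v ᵥ* Q) i + K * (πv ᵥ* Q) i := by
      simp only [vecMul_apply, hudef]
      rw [Finset.mul_sum, ← Finset.sum_add_distrib]
      apply Finset.sum_congr rfl
      intro j _
      ring
    rw [hvm, hπinv]
    have := congrFun hv i
    simp only [Pi.sub_apply] at this
    simp only [hudef]
    linarith
  -- the solution measure
  set m : X → ℝ := fun x =>
    if hx : minorEq st M X0 (st x) s0 then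
      u ⟨st x, hx⟩ * uniformOpt st M h (st x) x
    else 0 with hmdef
  have hm_fiber : ∀ (s : S) (hs : minorEq st M X0 s s0) (x : X), st x = s →
      m x = u ⟨s, hs⟩ * uniformOpt st M h s x := by
    intro s hs x hxs
    simp only [hmdef, hxs]
    rw [dif_pos hs]
  have hm_out : ∀ (x : X), ¬ minorEq st M X0 (st x) s0 → m x = 0 := by
    intro x hx
    simp only [hmdef]
    rw [dif_neg hx]
  refine ⟨m, ?_, ?_, ?_, ?_⟩
  · intro x
    simp only [hmdef]
    split
    · exact mul_nonneg (hu0 _) (uniformOpt_nonneg st M h _ _)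
    · exact le_refl 0
  · intro x hx
    by_cases hc : minorEq st M X0 (st x) s0
    · rw [hm_fiber (st x) hc x rfl]
      have : uniformOpt st M h (st x) x = 0 := by
        by_contra hne
        exact hx ((hmemX0 x hc).1 hne)
      rw [this, mul_zero]
    · exact hm_out x hc
  · intro s hs
    unfold Dv
    have hterm1 : ∑ x ∈ Finset.univ.filter (fun x => st x = s), m x = u ⟨s, hs⟩ := by
      rw [Finset.sum_congr rfl (fun x hx => hm_fiber s hs x (by
        simpa using (Finset.mem_filter.1 hx).2))]
      rw [← Finset.mul_sum]
      have : ∑ x ∈ Finset.univ.filter (fun x => st x = s), uniformOpt st M h s x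
          = ∑ x, uniformOpt st M h s x := by
        apply Finset.sum_subset (Finset.subset_univ _)
        intro x _ hx
        simp only [Finset.mem_filter, Finset.mem_univ, true_and] at hx
        by_contra hne
        exact hx ((uniformOpt_ne_zero_iff st M h).1 hne).1
      rw [this, sum_uniformOpt st M h, mul_one]
      obtain ⟨y, hy1, hy2⟩ := hbias.2 s
      exact ⟨y, hy1, hy2⟩
    have hterm2 : ∑ x, m x * (M.p x {s}).toReal = (u ᵥ* Q) ⟨s, hs⟩ := by
      rw [← Finset.sum_fiberwise Finset.univ st (fun x => m x * (M.p x {s}).toReal)]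
      have hfib : ∀ s' : S, ∑ x ∈ Finset.univ.filter (fun x => st x = s'),
          m x * (M.p x {s}).toReal
          = if hs' : minorEq st M X0 s' s0 then u ⟨s', hs'⟩ * Q ⟨s', hs'⟩ ⟨s, hs⟩
            else 0 := by
        intro s'
        split
        · rename_i hs'
          rw [Finset.sum_congr rfl (fun x hx => by
            rw [hm_fiber s' hs' x (by simpa using (Finset.mem_filter.1 hx).2), mul_assoc])]
          rw [← Finset.mul_sum]
        · rename_i hs'
          apply Finset.sum_eq_zero
          intro x hx
          have hxs' : st x = s' := by simpa using (Finset.mem_filter.1 hx).2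
          rw [hm_out x (hxs' ▸ hs'), zero_mul]
      rw [Finset.sum_congr rfl (fun s' _ => hfib s')]
      rw [← Finset.sum_filter_add_sum_filter_not Finset.univ
        (fun s' => minorEq st M X0 s' s0)]
      have hz : ∑ s' ∈ Finset.univ.filter (fun s' => ¬ minorEq st M X0 s' s0),
          (if hs' : minorEq st M X0 s' s0 then u ⟨s', hs'⟩ * Q ⟨s', hs'⟩ ⟨s, hs⟩ else 0)
          = 0 := by
        apply Finset.sum_eq_zero
        intro s' hs'
        simp only [Finset.mem_filter] at hs'
        rw [dif_neg hs'.2]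
      rw [hz, add_zero]
      rw [Finset.sum_subtype (p := fun s' => minorEq st M X0 s' s0) _
        (fun s' => by simp)
        (fun s' => if hs' : minorEq st M X0 s' s0 then
          u ⟨s', hs'⟩ * Q ⟨s', hs'⟩ ⟨s, hs⟩ else 0)]
      rw [vecMul_apply]
      apply Finset.sum_congr rfl
      intro a _
      rw [dif_pos a.2]
    rw [hterm1, hterm2, huQ]
  · intro s hs
    unfold Dv
    have hterm1 : ∑ x ∈ Finset.univ.filter (fun x => st x = s), m x = 0 := by
      apply Finset.sum_eq_zero
      intro x hx
      have hxs : st x = s := by simpa using (Finset.mem_filter.1 hx).2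
      exact hm_out x (hxs ▸ hs)
    have hterm2 : ∑ x, m x * (M.p x {s}).toReal = 0 := by
      apply Finset.sum_eq_zero
      intro x _
      by_cases hc : minorEq st M X0 (st x) s0
      · by_cases hmz : m x = 0
        · rw [hmz, zero_mul]
        · have hne : uniformOpt st M h (st x) x ≠ 0 := by
            intro hz
            exact hmz (by rw [hm_fiber (st x) hc x rfl, hz, mul_zero])
          have hxX0 : x ∈ X0 := (hmemX0 x hc).1 hne
          have : (M.p x {s}).toReal = 0 := by
            apply p_zero_of_not_minorEq st M h hbias hxX0
            intro hcon
            exact hs (minorEq_trans st M (minorEq_symm st M hcon) hc)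
          rw [this, mul_zero]
      · rw [hm_out x hc, zero_mul]
    rw [hterm1, hterm2, sub_zero]

end MDPAux

/-- **Representation of contracted invariant measures.** The restrictions to
`X ∖ X*(M)` of the invariant measures of `M` and of the minor `M/X*(M)` coincide. -/
theorem statement10
    (st : X → S) (hst : Function.Surjective st)
    (𝕄 : Set (MDP S X)) (h𝕄 : ∀ M' ∈ 𝕄, Communicating st M')
    (M : MDP S X) (hM : M ∈ 𝕄)
    (h : S → ℝ) (hbias : IsOptBias st M h) :
    (fun (μ : X → ℝ) (x : {x : X // x ∉ optPairs st M h}) => μ x.1) ''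
        {μ | InvMeasure st M μ}
      = (fun (μ : X → ℝ) (x : {x : X // x ∉ optPairs st M h}) => μ x.1) ''
        {μ | MinorInvMeasure st M (optPairs st M h) μ} := by
  classical
  set X0 := optPairs st M h with hX0def
  ext ρ
  simp only [Set.mem_image, Set.mem_setOf_eq]
  constructor
  · rintro ⟨μ, hμ, rfl⟩
    refine ⟨μ, ?_, rfl⟩
    obtain ⟨h1, h2⟩ := (invMeasure_iff st M μ).1 hμ
    refine (minorInvMeasure_iff st M X0 μ).2 ⟨h1, fun s => ?_⟩
    rw [Dm_eq_sum_Dv]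
    exact Finset.sum_eq_zero (fun s' _ => h2 s')
  · rintro ⟨ν, hν, rfl⟩
    obtain ⟨hν1, hν2⟩ := (minorInvMeasure_iff st M X0 ν).1 hν
    set νout : X → ℝ := fun x => if x ∈ X0 then 0 else ν x with hνout
    set νin : X → ℝ := fun x => if x ∈ X0 then ν x else 0 with hνin
    have hsplit : ν = fun x => νout x + νin x := by
      funext x; simp only [hνout, hνin]; split <;> ring
    have hDmout : ∀ s, Dm st M X0 νout s = 0 := by
      intro s
      have hadd := Dm_add st M X0 νout νin s
      rw [← hsplit] at hadd
      have hin : Dm st M X0 νin s = 0 := by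
        apply Dm_inner st M h hbias
        intro x hx
        simp only [hνin]
        rw [if_neg hx]
      rw [hν2 s, hin] at hadd
      linarith
    have hbsum : ∀ s0 : S, ∑ s ∈ Finset.univ.filter
        (fun s => minorEq st M X0 s s0), Dv st M νout s = 0 := by
      intro s0
      rw [← Dm_eq_sum_Dv]
      exact hDmout s0
    -- canonical representatives of the minor classes
    set e := Fintype.equivFin S with he
    have hClsNe : ∀ s : S, ((Finset.univ.filter
        (fun s' => minorEq st M X0 s' s)).image e).Nonempty :=
      fun s => ⟨e s, Finset.mem_image.2
        ⟨s, Finset.mem_filter.2 ⟨Finset.mem_univ s, minorEq_refl st M X0 s⟩, rfl⟩⟩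
    set rep : S → S := fun s => e.symm (((Finset.univ.filter
        (fun s' => minorEq st M X0 s' s)).image e).min' (hClsNe s)) with hrep
    have hmin_congr : ∀ (s₁ s₂ : Finset (Fin (Fintype.card S))) (h1 : s₁.Nonempty)
        (h2 : s₂.Nonempty), s₁ = s₂ → s₁.min' h1 = s₂.min' h2 := by
      rintro s₁ s₂ h1 h2 rfl; rfl
    have hrep_mem : ∀ s, minorEq st M X0 (rep s) s := by
      intro s
      have hmem := Finset.min'_mem _ (hClsNe s)
      rw [Finset.mem_image] at hmem
      obtain ⟨t, ht, hts⟩ := hmem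
      have heq : rep s = t := by
        simp only [hrep, ← hts, Equiv.symm_apply_apply]
      rw [heq]
      simpa using ht
    have hrep_congr : ∀ {a b : S}, minorEq st M X0 a b → rep a = rep b := by
      intro a b hab
      have hCls : Finset.univ.filter (fun s' => minorEq st M X0 s' a)
          = Finset.univ.filter (fun s' => minorEq st M X0 s' b) := by
        apply Finset.filter_congr; intro s' _; exact minorEq_class st M hab s'
      simp only [hrep]
      congr 1
      exact hmin_congr _ _ _ _ (by rw [hCls])
    set Reps : Finset S :=
      (Finset.univ.filter (fun s => ∃ y ∈ X0, st y = s)).image rep with hReps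
    have hspawn_minor : ∀ {a b : S}, minorEq st M X0 a b →
        (∃ y ∈ X0, st y = b) → (∃ y ∈ X0, st y = a) := by
      intro a b hab hb
      rcases hab with rfl | ⟨ha, _, _, _⟩
      · exact hb
      · exact ha
    have hReps_spawned : ∀ r ∈ Reps, ∃ y ∈ X0, st y = r := by
      intro r hr
      rw [hReps, Finset.mem_image] at hr
      obtain ⟨t, ht, rfl⟩ := hr
      simp only [Finset.mem_filter] at ht
      exact hspawn_minor (hrep_mem t) ht.2
    have hReps_idem : ∀ r ∈ Reps, rep r = r := by
      intro r hr
      rw [hReps, Finset.mem_image] at hr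
      obtain ⟨t, _, rfl⟩ := hr
      exact hrep_congr (hrep_mem t)
    have hcomp : ∀ r : S, ∃ m : X → ℝ, (∃ y ∈ X0, st y = r) →
        ((∀ x, 0 ≤ m x) ∧ (∀ x, x ∉ X0 → m x = 0) ∧
         (∀ s, minorEq st M X0 s r → Dv st M m s = - Dv st M νout s) ∧
         (∀ s, ¬ minorEq st M X0 s r → Dv st M m s = 0)) := by
      intro r
      by_cases hr : ∃ y ∈ X0, st y = r
      · obtain ⟨m, hm1, hm2, hm3, hm4⟩ :=
          comp_solution st M h hbias r hr (Dv st M νout) (hbsum r)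
        exact ⟨m, fun _ => ⟨hm1, hm2, hm3, hm4⟩⟩
      · exact ⟨fun _ => 0, fun hr' => absurd hr' hr⟩
    choose msol hmsol using hcomp
    refine ⟨fun x => νout x + ∑ r ∈ Reps, msol r x, ?_, ?_⟩
    · refine (invMeasure_iff st M _).2 ⟨?_, ?_⟩
      · intro x
        apply add_nonneg
        · simp only [hνout]
          split
          · exact le_refl 0
          · exact hν1 x
        · exact Finset.sum_nonneg fun r hr => (hmsol r (hReps_spawned r hr)).1 x
      · intro s
        rw [Dv_add st M νout (fun x => ∑ r ∈ Reps, msol r x) s,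
          Dv_sum st M Reps msol s]
        by_cases hs : ∃ y ∈ X0, st y = s
        · have hr0mem : rep s ∈ Reps := by
            rw [hReps]
            exact Finset.mem_image.2
              ⟨s, Finset.mem_filter.2 ⟨Finset.mem_univ s, hs⟩, rfl⟩
          have hr0sp := hReps_spawned _ hr0mem
          have hsum : ∑ r ∈ Reps, Dv st M (msol r) s = Dv st M (msol (rep s)) s := by
            apply Finset.sum_eq_single (rep s)
            · intro r hr hne
              apply (hmsol r (hReps_spawned r hr)).2.2.2
              intro hcon
              have : rep s = r := by rw [hrep_congr hcon]; exact hReps_idem r hr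
              exact hne this.symm
            · intro habs; exact absurd hr0mem habs
          rw [hsum,
            (hmsol (rep s) hr0sp).2.2.1 s (minorEq_symm st M (hrep_mem s))]
          ring
        · have hb0 : Dv st M νout s = 0 := by
            have hss := hbsum s
            have hsingle : Finset.univ.filter (fun s' => minorEq st M X0 s' s)
                = {s} := by
              apply Finset.eq_singleton_iff_unique_mem.2
              constructor
              · exact Finset.mem_filter.2 ⟨Finset.mem_univ s, minorEq_refl st M X0 s⟩
              · intro s' hs'
                simp only [Finset.mem_filter, Finset.mem_univ, true_and] at hs'
                rcases hs' with rfl | ⟨_, hsp, _, _⟩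
                · rfl
                · exact absurd hsp hs
            rw [hsingle, Finset.sum_singleton] at hss
            exact hss
          have hz : ∀ r ∈ Reps, Dv st M (msol r) s = 0 := by
            intro r hr
            apply (hmsol r (hReps_spawned r hr)).2.2.2
            intro hcon
            exact hs (hspawn_minor hcon (hReps_spawned r hr))
          rw [hb0, Finset.sum_eq_zero hz, add_zero]
    · funext x
      show νout x.1 + ∑ r ∈ Reps, msol r x.1 = ν x.1
      have hx : x.1 ∉ X0 := x.2
      have h1 : νout x.1 = ν x.1 := by
        simp only [hνout]
        rw [if_neg hx]
      have h2 : ∑ r ∈ Reps, msol r x.1 = 0 :=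
        Finset.sum_eq_zero fun r hr => (hmsol r (hReps_spawned r hr)).2.1 x.1 hx
      rw [h1, h2, add_zero]

end MDPTheory
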